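/- arXiv:1410.5872 — 2 statements merged into one kernel-verified Lean document; each statement's English description precedes it below -/
import Mathlib

section
/- There exists a constant C_S > 0 such that for all N ∈ ℕ the operator norm of the Shannon partial-sum operator S_N from PW^1_π into the bounded functions satisfies ‖S_N‖ = sup{ sup_{t∈ℝ} |(S_N f)(t)| : f ∈ PW^1_π, ‖f‖_{PW^1_π} ≤ 1 } ≥ C_S · log N. -/
/-! The bound is attained, up to the constant, by the Fejér kernel of order `2N` translated by
`π`, `F(ω) = |∑_{j=0}^{2N} (-1)^j e^{ijω}|² / (2N+1)`. It is nonnegative with integral `2π`, so it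
lies in the unit ball, and orthogonality of the exponentials on `[-π, π]` gives the samples
`(pwFun F)(n) = (-1)^n (1 - |n|/(2N+1))`, at least `1/2` in absolute value for `|n| ≤ N`.
At `t = N + 1/2` the sinc factors are `(-1)^(N-n) / (π (N + 1/2 - n))`, so all terms of
`S_N F (t)` have the same sign and `|S_N F (t)| ≥ (2π)⁻¹ ∑_{k=1}^{2N+1} 1/k ≥ (2π)⁻¹ log N`. -/

open MeasureTheory Filter Topology Real Complex
open scoped ENNReal NNReal

noncomputable section

/-- The normalized sinc function `sin(πx)/(πx)` (with value `1` at `x = 0`). -/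
def sincπ (x : ℝ) : ℝ := if x = 0 then 1 else Real.sin (π * x) / (π * x)

/-- `f` belongs to the Paley–Wiener space `PW^p_σ`: it is the inverse Fourier
transform of some `g ∈ L^p([-σ, σ])`. -/
def IsPW (p : ℝ≥0∞) (σ : ℝ) (f : ℂ → ℂ) : Prop :=
  ∃ g : ℝ → ℂ, MemLp g p (volume.restrict (Set.Icc (-σ) σ)) ∧
    ∀ z : ℂ, f z = ((1 / (2 * π) : ℝ) : ℂ) *
      ∫ ω in Set.Icc (-σ) σ, g ω * Complex.exp (Complex.I * (ω : ℂ) * z)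

/-- The symmetric partial sum of degree `N` of the Shannon sampling series. -/
def shannonSum (f : ℂ → ℂ) (N : ℕ) (t : ℝ) : ℂ :=
  ∑ n ∈ Finset.Icc (-(N : ℤ)) (N : ℤ), f (n : ℂ) * ((sincπ (t - n) : ℝ) : ℂ)

/-- The Paley–Wiener function with Fourier transform `g ∈ L^1([-π,π])`. -/
def pwFun (g : ℝ → ℂ) (z : ℂ) : ℂ :=
  ((1 / (2 * π) : ℝ) : ℂ) * ∫ ω in Set.Icc (-π) π, g ω * Complex.exp (Complex.I * (ω : ℂ) * z)

open scoped Finset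

theorem integral_Icc_exp_int_mul_I (m : ℤ) :
    ∫ ω in Set.Icc (-π) π, Complex.exp (Complex.I * m * ω) =
      if m = 0 then ((2 * π : ℝ) : ℂ) else 0 := by
  rw [integral_Icc_eq_integral_Ioc, ← intervalIntegral.integral_of_le (by linarith [pi_pos])]
  split_ifs with hm
  · simp [hm, two_mul]
  · have hm' : Complex.I * m ≠ 0 := by simp [hm]
    rw [integral_exp_mul_complex hm', div_eq_zero_iff, sub_eq_zero]
    left
    have hsin := Complex.two_sin (m * π)
    rw [Complex.sin_int_mul_pi, mul_zero, eq_comm, mul_eq_zero, sub_eq_zero] at hsin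
    push_cast
    convert (hsin.resolve_right Complex.I_ne_zero).symm using 2 <;> ring

theorem pwFun_exp_int_mul_I (k n : ℤ) :
    pwFun (fun ω => Complex.exp (Complex.I * k * ω)) n = if k + n = 0 then 1 else 0 := by
  have hexp : ∀ ω : ℝ, Complex.exp (Complex.I * k * ω) * Complex.exp (Complex.I * ω * n) =
      Complex.exp (Complex.I * ((k + n : ℤ) : ℂ) * ω) := fun ω => by
    rw [← Complex.exp_add]; push_cast; ring_nf
  simp_rw [pwFun, hexp, integral_Icc_exp_int_mul_I]
  split_ifs
  · push_cast; field_simp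
  · rw [mul_zero]

theorem pwFun_zero (g : ℝ → ℂ) :
    pwFun g 0 = ((1 / (2 * π) : ℝ) : ℂ) * ∫ ω in Set.Icc (-π) π, g ω := by
  simp [pwFun]

theorem pwFun_const_mul (c : ℂ) (g : ℝ → ℂ) (z : ℂ) :
    pwFun (fun ω => c * g ω) z = c * pwFun g z := by
  simp_rw [pwFun, mul_assoc, integral_const_mul]
  ring

theorem pwFun_finsetSum {ι : Type*} (s : Finset ι) (g : ι → ℝ → ℂ)
    (hg : ∀ i ∈ s, IntegrableOn (g i) (Set.Icc (-π) π)) (z : ℂ) :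
    pwFun (fun ω => ∑ i ∈ s, g i ω) z = ∑ i ∈ s, pwFun (g i) z := by
  have hint : ∀ i ∈ s, IntegrableOn (fun ω : ℝ => g i ω * Complex.exp (Complex.I * ω * z))
      (Set.Icc (-π) π) := fun i hi =>
    (hg i hi).mul_continuousOn (by fun_prop) isCompact_Icc
  simp_rw [pwFun, Finset.sum_mul, integral_finsetSum s hint, Finset.mul_sum]

theorem normSq_sum_exp_int_mul_I (s : Finset ℤ) (a : ℤ → ℂ) (ω : ℝ) :
    (Complex.normSq (∑ j ∈ s, a j * Complex.exp (Complex.I * j * ω)) : ℂ) =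
      ∑ j ∈ s, ∑ k ∈ s,
        a j * starRingEnd ℂ (a k) * Complex.exp (Complex.I * ((j - k : ℤ) : ℂ) * ω) := by
  rw [← Complex.mul_conj, map_sum, Finset.sum_mul_sum]
  refine Finset.sum_congr rfl fun j _ => Finset.sum_congr rfl fun k _ => ?_
  rw [map_mul, ← Complex.exp_conj, mul_mul_mul_comm, ← Complex.exp_add]
  simp only [map_mul, Complex.conj_I, Complex.conj_ofReal, map_intCast]
  push_cast; ring_nf

theorem pwFun_normSq_sum_exp_int_mul_I (s : Finset ℤ) (a : ℤ → ℂ) (n : ℤ) :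
    pwFun (fun ω => (Complex.normSq (∑ j ∈ s, a j * Complex.exp (Complex.I * j * ω)) : ℂ)) n =
      ∑ j ∈ s with j + n ∈ s, a j * starRingEnd ℂ (a (j + n)) := by
  have hint (m : ℤ) :
      IntegrableOn (fun ω : ℝ => Complex.exp (Complex.I * m * ω)) (Set.Icc (-π) π) :=
    (by fun_prop : Continuous _).integrableOn_Icc
  simp_rw [normSq_sum_exp_int_mul_I]
  rw [pwFun_finsetSum _ _ fun j _ => integrable_finsetSum _ fun k _ => (hint _).const_mul _]
  simp_rw [pwFun_finsetSum _ _ fun k _ => (hint _).const_mul _, pwFun_const_mul,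
    pwFun_exp_int_mul_I, Finset.sum_filter]
  refine Finset.sum_congr rfl fun j _ => ?_
  simp_rw [mul_ite, mul_one, mul_zero,
    show ∀ k : ℤ, (j - k + n = 0) ↔ (j + n = k) from fun k => by omega]
  exact Finset.sum_ite_eq s (j + n) _

def shiftedFejer (M : ℕ) (ω : ℝ) : ℝ :=
  ((M : ℝ) + 1)⁻¹ *
    Complex.normSq (∑ j ∈ Finset.Icc (0 : ℤ) M, (-1 : ℂ) ^ j * Complex.exp (Complex.I * j * ω))

theorem continuous_shiftedFejer (M : ℕ) : Continuous (shiftedFejer M) := by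
  unfold shiftedFejer; fun_prop

theorem shiftedFejer_nonneg (M : ℕ) (ω : ℝ) : 0 ≤ shiftedFejer M ω :=
  mul_nonneg (by positivity) (Complex.normSq_nonneg _)

theorem card_filter_add_mem_Icc (M : ℕ) {n : ℤ} (hn : |n| ≤ M) :
    (#{j ∈ Finset.Icc (0 : ℤ) M | j + n ∈ Finset.Icc (0 : ℤ) M} : ℤ) = M + 1 - |n| := by
  have hset : {j ∈ Finset.Icc (0 : ℤ) M | j + n ∈ Finset.Icc (0 : ℤ) M} =
      Finset.Icc (max 0 (-n)) (min M (M - n)) := by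
    ext j
    simp only [Finset.mem_filter, Finset.mem_Icc]
    omega
  rw [hset, Int.card_Icc]
  have := abs_cases n
  omega

theorem pwFun_shiftedFejer (M : ℕ) {n : ℤ} (hn : |n| ≤ M) :
    pwFun (fun ω => (shiftedFejer M ω : ℂ)) n =
      (-1 : ℂ) ^ n * ((1 - |(n : ℝ)| / ((M : ℝ) + 1) : ℝ) : ℂ) := by
  have hsign (j : ℤ) : (-1 : ℂ) ^ j * starRingEnd ℂ ((-1 : ℂ) ^ (j + n)) = (-1) ^ n := by
    rw [map_zpow₀, map_neg, map_one, zpow_add₀ (by norm_num), ← mul_assoc, ← mul_zpow]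
    norm_num
  simp_rw [shiftedFejer, Complex.ofReal_mul, pwFun_const_mul, pwFun_normSq_sum_exp_int_mul_I, hsign,
    Finset.sum_const, nsmul_eq_mul]
  rw [show (#{j ∈ Finset.Icc (0 : ℤ) M | j + n ∈ Finset.Icc (0 : ℤ) M} : ℂ) =
      ((M + 1 - |(n : ℝ)| : ℝ) : ℂ) by exact_mod_cast card_filter_add_mem_Icc M hn]
  push_cast
  field_simp

theorem integral_shiftedFejer (M : ℕ) : ∫ ω in Set.Icc (-π) π, shiftedFejer M ω = 2 * π := by
  have h := pwFun_shiftedFejer M (n := 0) (by simp)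
  rw [Int.cast_zero, pwFun_zero, integral_complex_ofReal, ← Complex.ofReal_mul] at h
  simp only [zpow_zero, abs_zero, Int.cast_zero, zero_div, sub_zero, one_mul,
    Complex.ofReal_inj] at h
  field_simp at h
  linarith

theorem memLp_shiftedFejer (M : ℕ) :
    MemLp (fun ω => (shiftedFejer M ω : ℂ)) 1 (volume.restrict (Set.Icc (-π) π)) :=
  memLp_one_iff_integrable.mpr
    ((Complex.continuous_ofReal.comp (continuous_shiftedFejer M)).integrableOn_Icc)

theorem eLpNorm_shiftedFejer (M : ℕ) :
    eLpNorm (fun ω => (shiftedFejer M ω : ℂ)) 1 (volume.restrict (Set.Icc (-π) π)) =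
      ENNReal.ofReal (2 * π) := by
  have henorm (ω : ℝ) : ‖(shiftedFejer M ω : ℂ)‖ₑ = ENNReal.ofReal (shiftedFejer M ω) := by
    rw [← ofReal_norm, Complex.norm_real, Real.norm_of_nonneg (shiftedFejer_nonneg M ω)]
  rw [eLpNorm_one_eq_lintegral_enorm, lintegral_congr fun ω => henorm ω,
    ← ofReal_integral_eq_lintegral_ofReal (continuous_shiftedFejer M).integrableOn_Icc
      (Eventually.of_forall (shiftedFejer_nonneg M)), integral_shiftedFejer]

theorem sincπ_int_add_half (k : ℤ) : sincπ (k + 1 / 2) = (-1) ^ k / (π * (k + 1 / 2)) := by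
  have hk : (k : ℝ) + 1 / 2 ≠ 0 := fun h => by
    have : 2 * k + 1 = 0 := by
      exact_mod_cast (show ((2 * k + 1 : ℤ) : ℝ) = 0 by push_cast; linarith)
    omega
  rw [sincπ, if_neg hk]
  congr 1
  rw [show π * (k + 1 / 2) = π / 2 + k * π by ring, Real.sin_add_int_mul_pi, Real.sin_pi_div_two,
    mul_one]

theorem sum_Icc_inv_eq_harmonic (N : ℕ) :
    ∑ n ∈ Finset.Icc (-(N : ℤ)) N, ((N : ℝ) + 1 - n)⁻¹ = harmonic (2 * N + 1) := by
  rw [harmonic]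
  push_cast
  refine Finset.sum_nbij' (fun n => ((N : ℤ) - n).toNat) (fun i => N - i)
    (fun n hn => by simp only [Finset.mem_Icc, Finset.mem_range] at hn ⊢; omega)
    (fun i hi => by simp only [Finset.mem_Icc, Finset.mem_range] at hi ⊢; omega)
    (fun n hn => by simp only [Finset.mem_Icc] at hn; omega)
    (fun i hi => by simp only [Finset.mem_range] at hi; omega) fun n hn => ?_
  simp only [Finset.mem_Icc] at hn
  have h : (((N : ℤ) - n).toNat : ℤ) = N - n := Int.toNat_of_nonneg (by omega)
  rw [show ((((N : ℤ) - n).toNat : ℕ) : ℝ) = N - n by exact_mod_cast h]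
  ring

theorem log_le_harmonic_two_mul_add_one (N : ℕ) : Real.log N ≤ harmonic (2 * N + 1) := by
  rcases N.eq_zero_or_pos with rfl | hN
  · simp [harmonic]
  · calc Real.log N ≤ Real.log ↑(2 * N + 1 + 1) := by gcongr; omega
      _ ≤ harmonic (2 * N + 1) := log_add_one_le_harmonic _

theorem inv_two_pi_mul_harmonic_le_norm_shannonSum (N : ℕ) :
    (2 * π)⁻¹ * harmonic (2 * N + 1) ≤
      ‖shannonSum (pwFun fun ω => (shiftedFejer (2 * N) ω : ℂ)) N (N + 1 / 2)‖ := by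
  have hterm : ∀ n ∈ Finset.Icc (-(N : ℤ)) N,
      pwFun (fun ω => (shiftedFejer (2 * N) ω : ℂ)) n * (sincπ (N + 1 / 2 - n) : ℂ) =
        (-1 : ℂ) ^ (N : ℤ) *
          (((1 - |(n : ℝ)| / (2 * N + 1)) / (π * (N - n + 1 / 2)) : ℝ) : ℂ) := by
    intro n hn
    rw [Finset.mem_Icc, ← abs_le] at hn
    have hsign : (-1 : ℂ) ^ n * (-1) ^ ((N : ℤ) - n) = (-1) ^ (N : ℤ) := by
      rw [← zpow_add₀ (by norm_num), add_sub_cancel]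
    have hsinc := sincπ_int_add_half (N - n)
    push_cast at hsinc
    rw [pwFun_shiftedFejer _ (by omega), show (N : ℝ) + 1 / 2 - n = N - n + 1 / 2 by ring, hsinc,
      ← hsign]
    push_cast
    ring
  have hweight : ∀ n ∈ Finset.Icc (-(N : ℤ)) N, 1 / 2 ≤ 1 - |(n : ℝ)| / (2 * N + 1) := by
    intro n hn
    rw [Finset.mem_Icc, ← abs_le] at hn
    have hn' : |(n : ℝ)| ≤ N := by exact_mod_cast hn
    rw [le_sub_comm, div_le_iff₀ (by positivity)]
    linarith
  rw [shannonSum, Finset.sum_congr rfl hterm, ← Finset.mul_sum, ← Complex.ofReal_sum, norm_mul,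
    norm_zpow, norm_neg, norm_one, one_zpow, one_mul, Complex.norm_real, Real.norm_eq_abs,
    ← sum_Icc_inv_eq_harmonic, Finset.mul_sum]
  refine (Finset.sum_le_sum fun n hn => ?_).trans (le_abs_self _)
  have hn' : (n : ℝ) ≤ N := by exact_mod_cast (Finset.mem_Icc.mp hn).2
  calc (2 * π)⁻¹ * ((N : ℝ) + 1 - n)⁻¹ = (1 / 2) / (π * (N - n + 1)) := by field_simp; ring
    _ ≤ (1 - |(n : ℝ)| / (2 * N + 1)) / (π * (N - n + 1 / 2)) :=
      div_le_div₀ (by linarith [hweight n hn]) (hweight n hn) (mul_pos pi_pos (by linarith))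
        (by gcongr; linarith)

/-- The norms of the Shannon partial-sum operators
`S_N : PW^1_π → B^∞_π` grow at least logarithmically: there is `C_S > 0` with
`‖S_N‖ ≥ C_S · log N` for all `N`.  (The unit ball of `PW^1_π` consists of the
functions with spectrum `g` satisfying `(1/2π)‖g‖_{L^1([-π,π])} ≤ 1`.) -/
theorem shannon_operator_norm_log_lower_bound :
    ∃ C_S > (0 : ℝ), ∀ N : ℕ,
      ENNReal.ofReal (C_S * Real.log N) ≤
        ⨆ (g : ℝ → ℂ) (_ : MemLp g 1 (volume.restrict (Set.Icc (-π) π)) ∧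
            eLpNorm g 1 (volume.restrict (Set.Icc (-π) π)) ≤ ENNReal.ofReal (2 * π)),
          ⨆ t : ℝ, (‖shannonSum (pwFun g) N t‖₊ : ℝ≥0∞) := by
  refine ⟨(2 * π)⁻¹, by positivity, fun N => ?_⟩
  set g : ℝ → ℂ := fun ω => (shiftedFejer (2 * N) ω : ℂ)
  have hbound : (2 * π)⁻¹ * Real.log N ≤ ‖shannonSum (pwFun g) N (N + 1 / 2)‖ :=
    (mul_le_mul_of_nonneg_left (log_le_harmonic_two_mul_add_one N) (by positivity)).trans
      (inv_two_pi_mul_harmonic_le_norm_shannonSum N)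
  calc ENNReal.ofReal ((2 * π)⁻¹ * Real.log N)
      ≤ ‖shannonSum (pwFun g) N (N + 1 / 2)‖₊ := by
        rw [← enorm_eq_nnnorm, ← ofReal_norm]
        exact ENNReal.ofReal_le_ofReal hbound
    _ ≤ ⨆ t : ℝ, (‖shannonSum (pwFun g) N t‖₊ : ℝ≥0∞) :=
        le_iSup (fun t => (‖shannonSum (pwFun g) N t‖₊ : ℝ≥0∞)) _
    _ ≤ _ := le_iSup₂ (f := fun g _ => ⨆ t : ℝ, (‖shannonSum (pwFun g) N t‖₊ : ℝ≥0∞)) g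
        ⟨memLp_shiftedFejer _, (eLpNorm_shiftedFejer _).le⟩
end
end

section
/- The Shannon sampling series diverges strongly on PW^1_π: there exists a function f₁ ∈ PW^1_π such that lim_{N→∞} sup_{t∈ℝ} |(S_N f₁)(t)| = ∞ (the full limit, not merely the limsup, is infinite). -/
open MeasureTheory Filter Topology Real Complex
open scoped ENNReal NNReal

noncomputable section

/-!
`f₁` is the inverse Fourier transform of the lacunary Fejér series
`g(ω) = ∑ₖ 2⁻ᵏ F_{mₖ}(ω + π)` with `mₖ = 2 ^ 4 ^ k`, where
`F_m(θ) = |∑_{j ≤ m} e^{ijθ}|² / (m + 1)` is nonnegative with integral `2π`; hence `g ≥ 0` and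
`‖g‖₁ = 4π`. The shift by `π` makes the samples alternate: `f₁(n) = (-1)ⁿ cₙ` with
`cₙ = ∑ₖ 2⁻ᵏ (1 - |n| / (mₖ + 1))₊ ≥ 0`. Since `sinc(N + 1/2 - n) = (-1)^(N-n) / (π (N + 1/2 - n))`,
all terms of `S_N f₁(N + 1/2)` have the same sign, so `|S_N f₁(N + 1/2)|` is at least
`(min_{0 ≤ n ≤ N} cₙ) · log (N + 1) / π`. If `mₖ ≤ N` and `2N ≤ m_{k+2}`, then `cₙ ≥ 2^(-k-3)`
for `0 ≤ n ≤ N` and `log (N + 1) ≥ 4ᵏ log 2`, so `|S_N f₁(N + 1/2)| ≥ 2ᵏ log 2 / (8π)`; such a `k`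
exists for every `N ≥ 2` and tends to infinity with `N`.
-/

open Finset

def invFourierIcc (σ : ℝ) (g : ℝ → ℂ) (z : ℂ) : ℂ :=
  ((1 / (2 * π) : ℝ) : ℂ) * ∫ ω in Set.Icc (-σ) σ, g ω * cexp (I * ω * z)

def dirichletSum (m : ℕ) (θ : ℝ) : ℂ := ∑ j ∈ range (m + 1), cexp (j * θ * I)

def fejerKernel (m : ℕ) (θ : ℝ) : ℝ≥0 := ‖dirichletSum m θ‖₊ ^ 2 / (m + 1)

@[fun_prop]
lemma continuous_fejerKernel (m : ℕ) : Continuous (fejerKernel m) := by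
  unfold fejerKernel dirichletSum
  fun_prop

def diagCount (m : ℕ) (n : ℤ) : ℕ :=
  #{p ∈ range (m + 1) ×ˢ range (m + 1) | (p.2 : ℤ) = p.1 + n}

lemma diagCount_le (m : ℕ) (n : ℤ) : diagCount m n ≤ m + 1 := by
  refine (card_le_card_of_injOn Prod.fst (fun p hp => ?_) fun p hp q hq hpq => ?_).trans_eq
    (card_range _)
  · simp only [coe_filter, mem_product, Set.mem_ofPred_eq] at hp
    exact hp.1.1
  · simp only [coe_filter, mem_product, Set.mem_ofPred_eq] at hp hq
    exact Prod.ext hpq (by omega)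

lemma le_diagCount (m : ℕ) {n : ℤ} (hn : 0 ≤ n) : m + 1 - n.toNat ≤ diagCount m n := by
  refine (card_range _).symm.trans_le
    (card_le_card_of_injOn (fun j => (j, j + n.toNat)) (fun j hj => ?_) fun i _ j _ h => ?_)
  · simp only [coe_range, Set.mem_Iio] at hj
    simp only [coe_filter, mem_product, mem_range, Set.mem_ofPred_eq]
    omega
  · exact (Prod.ext_iff.mp h).1

lemma diagCount_zero (m : ℕ) : diagCount m 0 = m + 1 :=
  (diagCount_le m 0).antisymm (by simpa using le_diagCount m le_rfl)

lemma integral_exp_int_mul_I (a : ℤ) :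
    ∫ ω in Set.Icc (-π) π, cexp (a * ω * I) = if a = 0 then 2 * (π : ℂ) else 0 := by
  rw [integral_Icc_eq_integral_Ioc, ← intervalIntegral.integral_of_le (by linarith [pi_pos])]
  split_ifs with ha
  · simp [ha, two_mul]
  · simp_rw [mul_right_comm _ _ I]
    rw [integral_exp_mul_complex (by simp [ha, I_ne_zero])]
    have : cexp (a * I * π) = cexp (a * I * (-π : ℝ)) :=
      Complex.exp_eq_exp_iff_exists_int.2 ⟨a, by push_cast; ring⟩
    rw [this, sub_self, zero_div]

lemma fejerKernel_eq_sum (m : ℕ) (θ : ℝ) :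
    ((fejerKernel m θ : ℝ) : ℂ) =
      (∑ p ∈ range (m + 1) ×ˢ range (m + 1), cexp ((((p.1 : ℤ) - p.2 : ℤ) : ℂ) * θ * I)) /
        (m + 1) := by
  have hconj : (starRingEnd ℂ) (dirichletSum m θ) = ∑ l ∈ range (m + 1), cexp (-(l * θ * I)) := by
    simp only [dirichletSum, map_sum, ← exp_conj, map_mul, conj_ofReal, conj_natCast, conj_I,
      mul_neg]
  have hsq : ((‖dirichletSum m θ‖ ^ 2 : ℝ) : ℂ) =
      dirichletSum m θ * (starRingEnd ℂ) (dirichletSum m θ) := by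
    rw [mul_conj, normSq_eq_norm_sq]
  have hcoe : ((fejerKernel m θ : ℝ) : ℂ) = ((‖dirichletSum m θ‖ ^ 2 : ℝ) : ℂ) / (m + 1) := by
    simp [fejerKernel]
  rw [hcoe, hsq, hconj, dirichletSum, sum_mul_sum, sum_product]
  congr 1
  refine sum_congr rfl fun j _ => sum_congr rfl fun l _ => ?_
  rw [← Complex.exp_add]
  push_cast
  ring_nf

lemma integral_fejerKernel_add_pi_mul_exp (m : ℕ) (n : ℤ) :
    ∫ ω in Set.Icc (-π) π, ((fejerKernel m (ω + π) : ℝ) : ℂ) * cexp (I * ω * n) =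
      (-1) ^ n * (2 * π) * diagCount m n / (m + 1) := by
  have hexpand (ω : ℝ) : ((fejerKernel m (ω + π) : ℝ) : ℂ) * cexp (I * ω * n) =
      (∑ p ∈ range (m + 1) ×ˢ range (m + 1), cexp ((((p.1 : ℤ) - p.2 : ℤ) : ℂ) * π * I) *
        cexp ((((p.1 : ℤ) - p.2 + n : ℤ) : ℂ) * ω * I)) / (m + 1) := by
    rw [fejerKernel_eq_sum, div_mul_eq_mul_div, sum_mul]
    congr 1
    refine sum_congr rfl fun p _ => ?_
    rw [← Complex.exp_add, ← Complex.exp_add]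
    push_cast
    ring_nf
  have hcoeff (p : ℕ × ℕ) : cexp ((((p.1 : ℤ) - p.2 : ℤ) : ℂ) * π * I) *
      (if (p.1 : ℤ) - p.2 + n = 0 then 2 * (π : ℂ) else 0) =
        if (p.2 : ℤ) = p.1 + n then (-1) ^ n * (2 * (π : ℂ)) else 0 := by
    split_ifs with h₁ h₂ h₂
    · rw [show cexp ((((p.1 : ℤ) - p.2 : ℤ) : ℂ) * π * I) = cexp (n * (π * I)) from
        Complex.exp_eq_exp_iff_exists_int.2
          ⟨-n, by push_cast [show (p.1 : ℤ) - p.2 = -n by omega]; ring⟩,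
        exp_int_mul, exp_pi_mul_I]
    · omega
    · omega
    · rw [mul_zero]
  simp_rw [hexpand]
  rw [integral_div, integral_finsetSum _ fun p _ => (by fun_prop : Continuous _).integrableOn_Icc]
  simp_rw [integral_const_mul, integral_exp_int_mul_I, hcoeff]
  rw [← sum_filter, sum_const, nsmul_eq_mul, diagCount]
  ring

lemma integral_fejerKernel_add_pi (m : ℕ) :
    ∫ ω in Set.Icc (-π) π, (fejerKernel m (ω + π) : ℝ) = 2 * π := by
  have h := integral_fejerKernel_add_pi_mul_exp m 0
  simp only [Int.cast_zero, mul_zero, Complex.exp_zero, mul_one, zpow_zero, one_mul,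
    diagCount_zero] at h
  push_cast at h
  rw [mul_div_assoc, div_self (by norm_cast), mul_one, integral_complex_ofReal] at h
  exact_mod_cast h

lemma lintegral_fejerKernel_add_pi (m : ℕ) :
    ∫⁻ ω in Set.Icc (-π) π, fejerKernel m (ω + π) = ENNReal.ofReal (2 * π) := by
  rw [lintegral_coe_eq_integral, integral_fejerKernel_add_pi]
  exact (by fun_prop : Continuous fun ω => (fejerKernel m (ω + π) : ℝ)).integrableOn_Icc

lemma ENNReal.coe_tsum_le_tsum_coe {α : Type*} (f : α → ℝ≥0) :
    ((∑' a, f a : ℝ≥0) : ℝ≥0∞) ≤ ∑' a, (f a : ℝ≥0∞) := by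
  by_cases hf : Summable f
  · exact (ENNReal.coe_tsum hf).le
  · simp [tsum_eq_zero_of_not_summable hf]

section FejerSeries

variable (b : ℕ → ℝ≥0) (m : ℕ → ℕ)

def fejerSeries (ω : ℝ) : ℝ≥0 := ∑' k, b k * fejerKernel (m k) (ω + π)

def fejerSeriesCoeff (n : ℤ) : ℝ := ∑' k, b k * (diagCount (m k) n / (m k + 1) : ℝ)

variable {b}

lemma measurable_fejerSeries : Measurable (fejerSeries b m) :=
  Measurable.tsum fun _ => by fun_prop

lemma tsum_lintegral_fejerKernel_ne_top (hb : Summable b) :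
    ∑' k, ∫⁻ ω in Set.Icc (-π) π, ((b k * fejerKernel (m k) (ω + π) : ℝ≥0) : ℝ≥0∞) ≠ ⊤ := by
  simp_rw [ENNReal.coe_mul, lintegral_const_mul' _ _ ENNReal.coe_ne_top,
    lintegral_fejerKernel_add_pi, ENNReal.tsum_mul_right, ← ENNReal.coe_tsum hb]
  exact ENNReal.mul_ne_top ENNReal.coe_ne_top ENNReal.ofReal_ne_top

lemma integrableOn_fejerSeries (hb : Summable b) :
    IntegrableOn (fun ω => ((fejerSeries b m ω : ℝ) : ℂ)) (Set.Icc (-π) π) := by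
  refine Integrable.ofReal ⟨(measurable_fejerSeries m).coe_nnreal_real.aestronglyMeasurable, ?_⟩
  calc ∫⁻ ω in Set.Icc (-π) π, ‖(fejerSeries b m ω : ℝ)‖ₑ
      ≤ ∫⁻ ω in Set.Icc (-π) π, ∑' k, ((b k * fejerKernel (m k) (ω + π) : ℝ≥0) : ℝ≥0∞) := by
        refine lintegral_mono fun ω => ?_
        rw [NNReal.enorm_eq]
        exact ENNReal.coe_tsum_le_tsum_coe _
    _ = ∑' k, ∫⁻ ω in Set.Icc (-π) π, ((b k * fejerKernel (m k) (ω + π) : ℝ≥0) : ℝ≥0∞) :=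
        lintegral_tsum fun _ => by fun_prop
    _ < ⊤ := (tsum_lintegral_fejerKernel_ne_top m hb).lt_top

lemma invFourierIcc_fejerSeries_intCast (hb : Summable b) (n : ℤ) :
    invFourierIcc π (fun ω => ((fejerSeries b m ω : ℝ) : ℂ)) n =
      (-1) ^ n * fejerSeriesCoeff b m n := by
  have hexpand (ω : ℝ) : ((fejerSeries b m ω : ℝ) : ℂ) * cexp (I * ω * n) =
      ∑' k, ((b k : ℝ) : ℂ) * (((fejerKernel (m k) (ω + π) : ℝ) : ℂ) * cexp (I * ω * n)) := by
    simp_rw [fejerSeries, NNReal.coe_tsum, ofReal_tsum, ← tsum_mul_right, NNReal.coe_mul,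
      ofReal_mul, mul_assoc]
  have hnorm (k : ℕ) (ω : ℝ) :
      ‖((b k : ℝ) : ℂ) * (((fejerKernel (m k) (ω + π) : ℝ) : ℂ) * cexp (I * ω * n))‖ₑ =
        ((b k * fejerKernel (m k) (ω + π) : ℝ≥0) : ℝ≥0∞) := by
    have hexp : ‖cexp (I * ω * n)‖ₑ = 1 := by
      simp [enorm_eq_nnnorm, ← NNReal.coe_eq_one, norm_exp]
    rw [enorm_mul, enorm_mul, hexp, mul_one]
    simp [enorm_eq_nnnorm]
  have hsum : ∑' k, ∫ ω in Set.Icc (-π) π,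
      ((b k : ℝ) : ℂ) * (((fejerKernel (m k) (ω + π) : ℝ) : ℂ) * cexp (I * ω * n)) =
        (-1) ^ n * (2 * π) * fejerSeriesCoeff b m n := by
    simp_rw [integral_const_mul, integral_fejerKernel_add_pi_mul_exp, fejerSeriesCoeff, ofReal_tsum,
      ← tsum_mul_left]
    refine tsum_congr fun k => ?_
    push_cast
    ring
  rw [invFourierIcc]
  simp_rw [hexpand]
  rw [integral_tsum (f := fun k ω => ((b k : ℝ) : ℂ) *
      (((fejerKernel (m k) (ω + π) : ℝ) : ℂ) * cexp (I * ω * n))) (fun k => by fun_prop)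
    (by simpa only [hnorm] using tsum_lintegral_fejerKernel_ne_top m hb), hsum]
  push_cast
  field_simp

lemma fejerSeriesCoeff_nonneg (n : ℤ) : 0 ≤ fejerSeriesCoeff b m n :=
  tsum_nonneg fun _ => by positivity

lemma div_two_le_fejerSeriesCoeff (hb : Summable b) {n : ℤ} {k : ℕ} (hn₀ : 0 ≤ n)
    (hn : 2 * n ≤ m k) : (b k : ℝ) / 2 ≤ fejerSeriesCoeff b m n := by
  have hle_one (j : ℕ) : (diagCount (m j) n / (m j + 1) : ℝ) ≤ 1 :=
    (div_le_one (by positivity)).2 (by exact_mod_cast diagCount_le _ _)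
  have hsum : Summable fun j => (b j : ℝ) * (diagCount (m j) n / (m j + 1) : ℝ) :=
    (NNReal.summable_coe.2 hb).of_nonneg_of_le (fun _ => by positivity) fun j =>
      mul_le_of_le_one_right (b j).2 (hle_one j)
  have hhalf : (m k + 1 : ℝ) ≤ 2 * diagCount (m k) n := by
    have := le_diagCount (m k) hn₀
    exact_mod_cast (by omega : m k + 1 ≤ 2 * diagCount (m k) n)
  calc (b k : ℝ) / 2 = b k * (1 / 2) := by ring
    _ ≤ b k * (diagCount (m k) n / (m k + 1) : ℝ) :=
      mul_le_mul_of_nonneg_left (by rw [le_div_iff₀ (by positivity)]; linarith) (b k).2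
    _ ≤ fejerSeriesCoeff b m n := hsum.le_tsum k fun _ _ => by positivity

end FejerSeries

lemma sincπ_intCast_add_half (a : ℤ) : sincπ (a + 1 / 2) = (-1) ^ a / (π * (a + 1 / 2)) := by
  have ha : (a : ℝ) + 1 / 2 ≠ 0 := by
    intro h
    have : (2 * a + 1 : ℤ) = 0 := by exact_mod_cast (by linarith : (2 * a + 1 : ℝ) = 0)
    omega
  rw [sincπ, if_neg ha, show π * (a + 1 / 2) = a * π + π / 2 by ring, Real.sin_add_pi_div_two,
    Real.cos_int_mul_pi]

section ShannonAtHalfIntegers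

variable {f : ℂ → ℂ} {c : ℤ → ℝ}

lemma pi_mul_add_half_sub_pos {N : ℕ} {n : ℤ} (hn : n ≤ N) : 0 < π * (N + 1 / 2 - n) := by
  have : (n : ℝ) ≤ N := by exact_mod_cast hn
  exact mul_pos pi_pos (by linarith)

lemma norm_shannonSum_add_half (hc : ∀ n, 0 ≤ c n) (hf : ∀ n : ℤ, f n = (-1) ^ n * c n)
    (N : ℕ) :
    ‖shannonSum f N (N + 1 / 2)‖ = ∑ n ∈ Icc (-(N : ℤ)) N, c n / (π * (N + 1 / 2 - n)) := by
  have hterm (n : ℤ) : f n * ((sincπ (N + 1 / 2 - n) : ℝ) : ℂ) =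
      (-1) ^ (N : ℤ) * ((c n / (π * (N + 1 / 2 - n)) : ℝ) : ℂ) := by
    have hsign : (-1 : ℂ) ^ (N : ℤ) = (-1) ^ n * (-1) ^ ((N : ℤ) - n) := by
      rw [← zpow_add₀ (by norm_num), add_sub_cancel]
    rw [hf, show (N : ℝ) + 1 / 2 - n = ((N - n : ℤ) : ℝ) + 1 / 2 by push_cast; ring,
      sincπ_intCast_add_half, hsign]
    push_cast
    ring
  rw [shannonSum, sum_congr rfl fun n _ => hterm n, ← mul_sum, norm_mul, norm_zpow, norm_neg,
    norm_one, one_zpow, one_mul, ← ofReal_sum, norm_real, Real.norm_of_nonneg]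
  exact sum_nonneg fun n hn =>
    div_nonneg (hc n) (pi_mul_add_half_sub_pos (mem_Icc.1 hn).2).le

lemma mul_log_le_norm_shannonSum_add_half (hc : ∀ n, 0 ≤ c n)
    (hf : ∀ n : ℤ, f n = (-1) ^ n * c n) {N : ℕ} {δ : ℝ} (hδ : 0 ≤ δ)
    (hcδ : ∀ n : ℤ, 0 ≤ n → n ≤ N → δ ≤ c n) :
    δ / π * Real.log (N + 1) ≤ ‖shannonSum f N (N + 1 / 2)‖ := by
  have hsub : (range N).image (fun i : ℕ => (N : ℤ) - i) ⊆ Icc (-(N : ℤ)) N := by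
    intro n hn
    simp only [mem_image, mem_range] at hn
    obtain ⟨i, hi, rfl⟩ := hn
    simp only [mem_Icc]
    omega
  have hterm (i : ℕ) (hi : i ∈ range N) : δ / π * (1 / (i + 1)) ≤
      c ((N : ℤ) - i) / (π * (i + 1 / 2)) := by
    rw [mem_range] at hi
    rw [div_mul_div_comm, mul_one]
    exact div_le_div₀ (hc _) (hcδ _ (by omega) (by omega)) (by positivity) (by nlinarith [pi_pos])
  rw [norm_shannonSum_add_half hc hf]
  calc δ / π * Real.log (N + 1)
      ≤ δ / π * harmonic N := by gcongr; exact_mod_cast log_add_one_le_harmonic N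
    _ = ∑ i ∈ range N, δ / π * (1 / (i + 1)) := by
      rw [← mul_sum]
      push_cast [harmonic]
      simp [one_div]
    _ ≤ ∑ i ∈ range N, c ((N : ℤ) - i) / (π * (i + 1 / 2)) := sum_le_sum hterm
    _ = ∑ n ∈ (range N).image (fun i : ℕ => (N : ℤ) - i), c n / (π * (N + 1 / 2 - n)) := by
      rw [sum_image fun i _ j _ h => by simpa using h]
      push_cast
      ring_nf
    _ ≤ ∑ n ∈ Icc (-(N : ℤ)) N, c n / (π * (N + 1 / 2 - n)) :=
      sum_le_sum_of_subset_of_nonneg hsub fun n hn _ =>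
        div_nonneg (hc n) (pi_mul_add_half_sub_pos (mem_Icc.1 hn).2).le

end ShannonAtHalfIntegers

def fejerDegree (k : ℕ) : ℕ := 2 ^ 4 ^ k

lemma fejerDegree_strictMono : StrictMono fejerDegree := fun _ _ h =>
  Nat.pow_lt_pow_right (by norm_num) (Nat.pow_lt_pow_right (by norm_num) h)

lemma exists_fejerDegree_le_two_mul_le {N : ℕ} (hN : 2 ≤ N) :
    ∃ k, fejerDegree k ≤ N ∧ 2 * N ≤ fejerDegree (k + 2) := by
  set L := Nat.log 2 N
  have hL : 1 ≤ L := Nat.le_log_of_pow_le (by norm_num) (by simpa using hN)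
  refine ⟨Nat.log 4 L, ?_, ?_⟩
  · calc fejerDegree (Nat.log 4 L) ≤ 2 ^ L :=
          Nat.pow_le_pow_right (by norm_num) (Nat.pow_log_le_self 4 (by omega))
      _ ≤ N := Nat.pow_log_le_self 2 (by omega)
  · have hN_lt : N < 2 ^ (L + 1) := Nat.lt_pow_succ_log_self (by norm_num) N
    have hL_lt : L < 4 ^ (Nat.log 4 L + 1) := Nat.lt_pow_succ_log_self (by norm_num) L
    have h4 : L + 1 < 4 ^ (Nat.log 4 L + 2) := by rw [pow_succ]; omega
    calc 2 * N ≤ 2 ^ (L + 2) := by rw [pow_succ]; omega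
      _ ≤ fejerDegree (Nat.log 4 L + 2) := Nat.pow_le_pow_right (by norm_num) h4

def divergentSpectrum (ω : ℝ) : ℂ := (fejerSeries (fun k => 2⁻¹ ^ k) fejerDegree ω : ℝ)

lemma le_norm_shannonSum_divergentSpectrum {N k : ℕ} (hk : fejerDegree k ≤ N)
    (hN : 2 * N ≤ fejerDegree (k + 2)) :
    2 ^ k * Real.log 2 / (8 * π) ≤
      ‖shannonSum (invFourierIcc π divergentSpectrum) N (N + 1 / 2)‖ := by
  have hb : Summable fun k : ℕ => (2⁻¹ : ℝ≥0) ^ k := NNReal.summable_geometric (by norm_num)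
  set δ : ℝ := ((2⁻¹ : ℝ≥0) ^ (k + 2) : ℝ≥0) / 2
  have hbound := mul_log_le_norm_shannonSum_add_half (fejerSeriesCoeff_nonneg _)
    (invFourierIcc_fejerSeries_intCast fejerDegree hb) (N := N) (δ := δ) (by positivity)
    fun n hn₀ hnN => div_two_le_fejerSeriesCoeff fejerDegree hb (k := k + 2) hn₀ (by omega)
  refine le_trans ?_ hbound
  have hlog : Real.log (fejerDegree k) = 4 ^ k * Real.log 2 := by
    rw [fejerDegree, Nat.cast_pow, Real.log_pow]
    push_cast
    ring
  calc 2 ^ k * Real.log 2 / (8 * π) = δ / π * Real.log (fejerDegree k) := by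
        rw [hlog]
        simp only [δ]
        field_simp
        push_cast
        rw [show (4 : ℝ) ^ k = 2 ^ k * 2 ^ k by rw [← mul_pow]; norm_num, pow_add, div_pow, one_pow]
        field_simp
        ring
    _ ≤ δ / π * Real.log (N + 1) := by
        gcongr
        · exact Nat.cast_pos.2 (by unfold fejerDegree; positivity)
        · exact_mod_cast (hk.trans (Nat.le_succ N))

lemma tendsto_norm_shannonSum_divergentSpectrum :
    Tendsto (fun N : ℕ => ‖shannonSum (invFourierIcc π divergentSpectrum) N (N + 1 / 2)‖)
      atTop atTop := by
  refine tendsto_atTop_atTop.2 fun B => ?_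
  have hlog2 : 0 < Real.log 2 / (8 * π) := by positivity
  obtain ⟨K, hK⟩ := pow_unbounded_of_one_lt (B / (Real.log 2 / (8 * π))) one_lt_two
  refine ⟨fejerDegree (K + 2), fun N hN => ?_⟩
  have h2N : 2 ≤ N := (fejerDegree_strictMono.monotone (Nat.zero_le _)).trans hN
  obtain ⟨k, hkN, hNk⟩ := exists_fejerDegree_le_two_mul_le h2N
  have hKk : K ≤ k := by
    have := fejerDegree_strictMono.lt_iff_lt.1 (hN.trans_lt (by omega : N < 2 * N) |>.trans_le hNk)
    omega
  calc B ≤ 2 ^ K * Real.log 2 / (8 * π) := by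
        rw [div_lt_iff₀ hlog2] at hK
        rw [mul_div_assoc]
        exact hK.le
    _ ≤ 2 ^ k * Real.log 2 / (8 * π) := by gcongr; norm_num
    _ ≤ _ := le_norm_shannonSum_divergentSpectrum hkN hNk

/-- The Shannon sampling series diverges strongly on `PW^1_π`:
there is `f₁ ∈ PW^1_π` with `lim_{N→∞} sup_{t∈ℝ} |(S_N f₁)(t)| = ∞` (the full
limit, not merely the limsup). -/
theorem shannon_strong_divergence_PW1 :
    ∃ f₁ : ℂ → ℂ, IsPW 1 π f₁ ∧
      Tendsto (fun N : ℕ => ⨆ t : ℝ, (‖shannonSum f₁ N t‖₊ : ℝ≥0∞)) atTop (𝓝 ⊤) := by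
  refine ⟨invFourierIcc π divergentSpectrum, ⟨divergentSpectrum, memLp_one_iff_integrable.2
    (integrableOn_fejerSeries _ (NNReal.summable_geometric (by norm_num))), fun _ => rfl⟩, ?_⟩
  refine tendsto_nhds_top_mono
    (ENNReal.tendsto_ofReal_atTop.comp tendsto_norm_shannonSum_divergentSpectrum)
    (Eventually.of_forall fun N => ?_)
  exact (ofReal_norm _).trans_le (le_iSup (fun t : ℝ => (‖shannonSum _ N t‖₊ : ℝ≥0∞)) _)
end
end
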